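/- If an m×n pattern P can be uniquely self-assembled by a rectilinear tile assembly system (RTAS) T with m₀ tile types, then there is also a directed RTAS (DTAS) T' with m₀ tile types which self-assembles P. -/

import Mathlib

/-- A colored Wang tile with a color and four glues (north, east, south, west). -/
structure Tile (C G : Type) where
  color : C
  north : G
  east : G
  south : G
  west : G
deriving DecidableEq

/-- A rectilinear tile assembly system: a finite set of tile types together with
an L-shaped seed, given by its north glues (bottom arm) and east glues (left arm). -/
structure RTAS (C G : Type) where
  tiles : Finset (Tile C G)
  seedN : ℕ → G
  seedE : ℕ → G

/-- A tile assignment for the `M × N` rectangle spanned by the seed: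
every tile belongs to the system, west/south glues match the east/north glues of the
west/south neighbours, and the seed glues on the boundary. -/
def IsAssignment {C G : Type} (T : RTAS C G) (M N : ℕ) (f : ℕ → ℕ → Tile C G) : Prop :=
  (∀ x < M, ∀ y < N, f x y ∈ T.tiles) ∧
  (∀ y < N, (f 0 y).west = T.seedE y) ∧
  (∀ x < M, (f x 0).south = T.seedN x) ∧
  (∀ x, x + 1 < M → ∀ y < N, (f (x + 1) y).west = (f x y).east) ∧
  (∀ x < M, ∀ y, y + 1 < N → (f x (y + 1)).south = (f x y).north)

/-- `T` self-assembles the `M × N` pattern `P` if some tile assignment realizes `P`. -/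
def SelfAssembles {C G : Type} (T : RTAS C G) (M N : ℕ) (P : ℕ → ℕ → C) : Prop :=
  ∃ f, IsAssignment T M N f ∧ ∀ x < M, ∀ y < N, (f x y).color = P x y

/-- A directed RTAS: distinct tile types differ in their south or west glue. -/
def DirectedTAS {C G : Type} (T : RTAS C G) : Prop :=
  ∀ t₁ ∈ T.tiles, ∀ t₂ ∈ T.tiles, t₁ ≠ t₂ → t₁.south ≠ t₂.south ∨ t₁.west ≠ t₂.west

/-- The set of colors occurring in the `M × N` pattern `P`. -/
def colorsOf {C : Type} [DecidableEq C] (M N : ℕ) (P : ℕ → ℕ → C) : Finset C :=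
  (Finset.range M ×ˢ Finset.range N).image fun q => P q.1 q.2

/-- A producible partial configuration: every placed tile is in `T` and is supported
by its west and south neighbours (or by the seed on the boundary). -/
def IsProducible {C G : Type} (T : RTAS C G) (M N : ℕ)
    (g : ℕ → ℕ → Option (Tile C G)) : Prop :=
  (∀ x y, M ≤ x ∨ N ≤ y → g x y = none) ∧
  ∀ x y t, g x y = some t →
    t ∈ T.tiles ∧
    (x = 0 → t.west = T.seedE y) ∧
    (∀ x', x = x' + 1 → ∃ t', g x' y = some t' ∧ t.west = t'.east) ∧
    (y = 0 → t.south = T.seedN x) ∧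
    (∀ y', y = y' + 1 → ∃ t', g x y' = some t' ∧ t.south = t'.north)

/-- The tile `t` can attach to the configuration `g` at the empty position `(x, y)`:
its west and south neighbours (or the seed) are present and the inputs match. -/
def CanAttach {C G : Type} (T : RTAS C G) (M N : ℕ)
    (g : ℕ → ℕ → Option (Tile C G)) (x y : ℕ) (t : Tile C G) : Prop :=
  x < M ∧ y < N ∧ g x y = none ∧ t ∈ T.tiles ∧
  ((x = 0 ∧ t.west = T.seedE y) ∨
    (∃ x' t', x = x' + 1 ∧ g x' y = some t' ∧ t.west = t'.east)) ∧
  ((y = 0 ∧ t.south = T.seedN x) ∨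
    (∃ y' t', y = y' + 1 ∧ g x y' = some t' ∧ t.south = t'.north))

/-- A maximal configuration grown from the seed: producible and no tile can attach. -/
def MaximalConfig {C G : Type} (T : RTAS C G) (M N : ℕ)
    (g : ℕ → ℕ → Option (Tile C G)) : Prop :=
  IsProducible T M N g ∧ ∀ x y t, ¬ CanAttach T M N g x y t

/-- `T` uniquely self-assembles `P`: some tile assignment realizes `P` and every
maximal structure grown from the seed yields this same assignment. -/
def UniquelySelfAssembles {C G : Type} (T : RTAS C G) (M N : ℕ)
    (P : ℕ → ℕ → C) : Prop :=
  ∃ f, IsAssignment T M N f ∧ (∀ x < M, ∀ y < N, (f x y).color = P x y) ∧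
    ∀ g, MaximalConfig T M N g → ∀ x < M, ∀ y < N, g x y = some (f x y)

/-!
If `f` is the unique terminal assembly of `T`, then each tile `f a b` is the only tile of `T`
with its south and west glues: another tile `t` with the same inputs could attach at `(a, b)` to
the part of `f` strictly below-left of `(a, b)`, and growing this to a terminal assembly would
contradict uniqueness. Giving every other tile of `T` a private south glue therefore makes `T`
directed without changing the number of tile types or the assembly of `P`.
-/

variable {C G : Type}

def InputUnique (T : RTAS C G) (t : Tile C G) : Prop :=
  ∀ t' ∈ T.tiles, t'.south = t.south → t'.west = t.west → t' = t

section Growth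

variable {T : RTAS C G} {M N : ℕ}

def place (g : ℕ → ℕ → Option (Tile C G)) (x y : ℕ) (t : Tile C G) :
    ℕ → ℕ → Option (Tile C G) :=
  fun x' y' => if x' = x ∧ y' = y then some t else g x' y'

def emptyCells (M N : ℕ) (g : ℕ → ℕ → Option (Tile C G)) : Finset (ℕ × ℕ) :=
  (Finset.range M ×ˢ Finset.range N).filter fun p => (g p.1 p.2).isNone

variable {g : ℕ → ℕ → Option (Tile C G)} {x y : ℕ} {t : Tile C G}

theorem place_eq_of_eq_some {x' y' : ℕ} {t' : Tile C G} (hxy : g x y = none)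
    (h : g x' y' = some t') : place g x y t x' y' = some t' := by
  unfold place
  split_ifs with hx
  · obtain ⟨rfl, rfl⟩ := hx
    simp_all
  · exact h

theorem IsProducible.place_of_canAttach (hg : IsProducible T M N g)
    (h : CanAttach T M N g x y t) : IsProducible T M N (place g x y t) := by
  obtain ⟨hx, hy, hnone, ht, hw, hs⟩ := h
  have hle {x' y' t'} (h : g x' y' = some t') : place g x y t x' y' = some t' :=
    place_eq_of_eq_some hnone h
  refine ⟨fun x' y' h' => ?_, fun x' y' t' h' => ?_⟩
  · rw [place, if_neg (by omega), hg.1 _ _ h']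
  by_cases hxy : x' = x ∧ y' = y
  · obtain ⟨rfl, rfl⟩ := hxy
    obtain rfl : t = t' := by simpa [place] using h'
    have hW : (x' = 0 → t.west = T.seedE y') ∧ ∀ x'', x' = x'' + 1 →
        ∃ t'', place g x' y' t x'' y' = some t'' ∧ t.west = t''.east := by
      rcases hw with ⟨rfl, hw⟩ | ⟨x'', t'', rfl, hg'', hw⟩
      · exact ⟨fun _ => hw, fun _ h => absurd h (by omega)⟩
      · refine ⟨fun h => absurd h (by omega), fun _ h => ?_⟩
        cases h
        exact ⟨t'', hle hg'', hw⟩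
    have hS : (y' = 0 → t.south = T.seedN x') ∧ ∀ y'', y' = y'' + 1 →
        ∃ t'', place g x' y' t x' y'' = some t'' ∧ t.south = t''.north := by
      rcases hs with ⟨rfl, hs⟩ | ⟨y'', t'', rfl, hg'', hs⟩
      · exact ⟨fun _ => hs, fun _ h => absurd h (by omega)⟩
      · refine ⟨fun h => absurd h (by omega), fun _ h => ?_⟩
        cases h
        exact ⟨t'', hle hg'', hs⟩
    exact ⟨ht, hW.1, hW.2, hS.1, hS.2⟩
  · rw [place, if_neg hxy] at h'
    obtain ⟨ht', hW₀, hW, hS₀, hS⟩ := hg.2 x' y' t' h'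
    refine ⟨ht', hW₀, fun x'' h => ?_, hS₀, fun y'' h => ?_⟩
    · obtain ⟨t'', hg'', he⟩ := hW x'' h
      exact ⟨t'', hle hg'', he⟩
    · obtain ⟨t'', hg'', he⟩ := hS y'' h
      exact ⟨t'', hle hg'', he⟩

theorem card_emptyCells_place_lt (h : CanAttach T M N g x y t) :
    (emptyCells M N (place g x y t)).card < (emptyCells M N g).card := by
  obtain ⟨hx, hy, hnone, -⟩ := h
  refine Finset.card_lt_card ((Finset.ssubset_iff_of_subset fun p hp => ?_).2 ⟨(x, y), ?_, ?_⟩)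
  · simp only [emptyCells, Finset.mem_filter, place] at hp ⊢
    by_cases hxy : p.1 = x ∧ p.2 = y <;> simp_all
  · simp [emptyCells, hx, hy, hnone]
  · simp [emptyCells, place]

theorem IsProducible.exists_maximalConfig (hg : IsProducible T M N g) :
    ∃ g', MaximalConfig T M N g' ∧ ∀ x y t, g x y = some t → g' x y = some t := by
  induction hn : (emptyCells M N g).card using Nat.strong_induction_on generalizing g with
  | _ n ih =>
  by_cases hmax : ∀ x y t, ¬ CanAttach T M N g x y t
  · exact ⟨g, ⟨hg, hmax⟩, fun _ _ _ => id⟩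
  push Not at hmax
  obtain ⟨x, y, t, hat⟩ := hmax
  obtain ⟨g', hg', hext⟩ :=
    ih _ (hn ▸ card_emptyCells_place_lt hat) (hg.place_of_canAttach hat) rfl
  exact ⟨g', hg', fun x' y' t' h => hext _ _ _ (place_eq_of_eq_some hat.2.2.1 h)⟩

end Growth

section Assignment

variable {T : RTAS C G} {M N : ℕ} {f : ℕ → ℕ → Tile C G}

open Classical in
noncomputable def partialConfig (f : ℕ → ℕ → Tile C G) (S : Set (ℕ × ℕ)) :
    ℕ → ℕ → Option (Tile C G) :=
  fun x y => if (x, y) ∈ S then some (f x y) else none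

theorem IsAssignment.isProducible_partialConfig {S : Set (ℕ × ℕ)} (hf : IsAssignment T M N f)
    (hS : IsLowerSet S) (hSMN : ∀ p ∈ S, p.1 < M ∧ p.2 < N) :
    IsProducible T M N (partialConfig f S) := by
  refine ⟨fun x y h => if_neg fun hp => ?_, fun x y t h => ?_⟩
  · have := hSMN _ hp
    omega
  simp only [partialConfig] at h
  split_ifs at h with hp
  cases h
  obtain ⟨hx, hy⟩ := hSMN _ hp
  have below {x' y'} (hle : (x', y') ≤ (x, y)) : partialConfig f S x' y' = some (f x' y') :=
    if_pos (hS hle hp)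
  refine ⟨hf.1 x hx y hy, ?_, ?_, ?_, ?_⟩
  · rintro rfl
    exact hf.2.1 y hy
  · rintro x' rfl
    exact ⟨_, below (by simp), hf.2.2.2.1 x' hx y hy⟩
  · rintro rfl
    exact hf.2.2.1 x hx
  · rintro y' rfl
    exact ⟨_, below (by simp), hf.2.2.2.2 x hx y' hy⟩

theorem IsAssignment.canAttach_partialConfig_Iio {a b : ℕ} {t : Tile C G}
    (hf : IsAssignment T M N f) (ha : a < M) (hb : b < N) (ht : t ∈ T.tiles)
    (hs : t.south = (f a b).south) (hw : t.west = (f a b).west) :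
    CanAttach T M N (partialConfig f (Set.Iio (a, b))) a b t := by
  refine ⟨ha, hb, by simp [partialConfig], ht, ?_, ?_⟩
  · cases a with
    | zero => exact .inl ⟨rfl, hw.trans (hf.2.1 b hb)⟩
    | succ a =>
      exact .inr ⟨a, f a b, rfl, by simp [partialConfig, Prod.mk_lt_mk],
        hw.trans (hf.2.2.2.1 a ha b hb)⟩
  · cases b with
    | zero => exact .inl ⟨rfl, hs.trans (hf.2.2.1 a ha)⟩
    | succ b =>
      exact .inr ⟨b, f a b, rfl, by simp [partialConfig, Prod.mk_lt_mk],
        hs.trans (hf.2.2.2.2 a ha b hb)⟩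

theorem IsAssignment.inputUnique {a b : ℕ} (hf : IsAssignment T M N f)
    (huniq : ∀ g, MaximalConfig T M N g → ∀ x < M, ∀ y < N, g x y = some (f x y))
    (ha : a < M) (hb : b < N) : InputUnique T (f a b) := by
  intro t ht hs hw
  have hbelow : ∀ p ∈ Set.Iio (a, b), p.1 < M ∧ p.2 < N :=
    fun p hp => have hle := Prod.le_def.1 (Set.mem_Iio.1 hp).le
      ⟨hle.1.trans_lt ha, hle.2.trans_lt hb⟩
  have hstart := (hf.isProducible_partialConfig (isLowerSet_Iio _) hbelow).place_of_canAttach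
    (hf.canAttach_partialConfig_Iio ha hb ht hs hw)
  obtain ⟨g, hg, hext⟩ := hstart.exists_maximalConfig
  have hgab := hext a b t (by simp [place])
  rw [huniq g hg a ha b hb] at hgab
  exact (Option.some.inj hgab).symm

end Assignment

def Tile.mapGlue {G' : Type} (φ : G → G') (t : Tile C G) : Tile C G' :=
  ⟨t.color, φ t.north, φ t.east, φ t.south, φ t.west⟩

namespace RTAS

variable (T : RTAS C G)

open Classical in
noncomputable def directedTile (t : Tile C G) : Tile C (G ⊕ Tile C G) :=
  if InputUnique T t then t.mapGlue Sum.inl else { t.mapGlue Sum.inl with south := Sum.inr t }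

noncomputable def toDirected [DecidableEq C] [DecidableEq G] : RTAS C (G ⊕ Tile C G) :=
  ⟨T.tiles.image T.directedTile, Sum.inl ∘ T.seedN, Sum.inl ∘ T.seedE⟩

variable {T}

theorem eq_of_directedTile_inputs_eq {t₁ t₂ : Tile C G} (h₁ : t₁ ∈ T.tiles)
    (hs : (T.directedTile t₁).south = (T.directedTile t₂).south)
    (hw : (T.directedTile t₁).west = (T.directedTile t₂).west) : t₁ = t₂ := by
  unfold directedTile at hs hw
  split_ifs at hs hw with hu₁ hu₂ hu₂ <;> simp only [Tile.mapGlue, Sum.inl.injEq,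
    Sum.inr.injEq, reduceCtorEq] at hs hw
  · exact hu₂ t₁ h₁ hs hw
  · exact hs

variable [DecidableEq C] [DecidableEq G]

theorem directedTAS_toDirected : DirectedTAS T.toDirected := by
  simp only [DirectedTAS, toDirected, Finset.forall_mem_image]
  intro t₁ h₁ t₂ h₂ hne
  by_contra! h
  exact hne (congrArg _ (eq_of_directedTile_inputs_eq h₁ h.1 h.2))

theorem card_toDirected : T.toDirected.tiles.card = T.tiles.card :=
  Finset.card_image_of_injOn fun _ h₁ _ _ h =>
    eq_of_directedTile_inputs_eq h₁ (congrArg Tile.south h) (congrArg Tile.west h)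

theorem selfAssembles_toDirected {M N : ℕ} {f : ℕ → ℕ → Tile C G} {P : ℕ → ℕ → C}
    (hf : IsAssignment T M N f) (hP : ∀ x < M, ∀ y < N, (f x y).color = P x y)
    (hu : ∀ x < M, ∀ y < N, InputUnique T (f x y)) : SelfAssembles T.toDirected M N P := by
  refine ⟨fun x y => (f x y).mapGlue Sum.inl, ⟨fun x hx y hy => ?_, fun y hy => ?_,
    fun x hx => ?_, fun x hx y hy => ?_, fun x hx y hy => ?_⟩, hP⟩
  · have hdir : T.directedTile (f x y) = (f x y).mapGlue Sum.inl := if_pos (hu x hx y hy)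
    show (f x y).mapGlue Sum.inl ∈ T.tiles.image T.directedTile
    exact hdir ▸ Finset.mem_image_of_mem _ (hf.1 x hx y hy)
  · exact congrArg Sum.inl (hf.2.1 y hy)
  · exact congrArg Sum.inl (hf.2.2.1 x hx)
  · exact congrArg Sum.inl (hf.2.2.2.1 x hx y hy)
  · exact congrArg Sum.inl (hf.2.2.2.2 x hx y hy)

end RTAS

/-- If an `M × N` pattern `P` can be uniquely self-assembled by an RTAS `T` with `m₀`
tile types, then there is also a directed RTAS `T'` with `m₀` tile types which
self-assembles `P`. -/
theorem directed_of_unique_self_assembly {C G : Type} [DecidableEq C] [DecidableEq G]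
    (M N m₀ : ℕ) (P : ℕ → ℕ → C) (T : RTAS C G)
    (hcard : T.tiles.card = m₀)
    (hU : UniquelySelfAssembles T M N P) :
    ∃ (G' : Type) (T' : RTAS C G'),
      DirectedTAS T' ∧ T'.tiles.card = m₀ ∧ SelfAssembles T' M N P := by
  obtain ⟨f, hf, hP, huniq⟩ := hU
  exact ⟨_, T.toDirected, RTAS.directedTAS_toDirected, RTAS.card_toDirected.trans hcard,
    RTAS.selfAssembles_toDirected hf hP fun x hx y hy => hf.inputUnique huniq hx hy⟩
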